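/- Let p, m : [0,∞) → (0,∞) be continuous with p(t) ~ h·t^{-d/α} and m(t) ~ c·t^{-d/α} as t → ∞, where d/α > 1, h, c > 0, and both p and m are integrable on [0,∞) with P = ∫₀^∞ p, M = ∫₀^∞ m. Then ∫₀^t p(t−s) m(s) ds ~ (M·h + P·c)·t^{-d/α} as t → ∞. -/

import Mathlib

/-!
Write `q = d / α` and split the convolution at `t / 2`. For `s ≤ t / 2` one has
`t - s ≥ t / 2`, so `p (t - s) / t ^ (-q)` is bounded uniformly and tends to `h` for each
fixed `s`; dominated convergence against the integrable `m` gives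
`∫₀^{t/2} p (t - s) m s ds ~ h M t ^ (-q)`. The substitution `s ↦ t - s` turns the other half
into the same integral with `p` and `m` exchanged, which is `~ c P t ^ (-q)`.
-/

open MeasureTheory Filter Set Topology

lemma tendsto_div_of_tendsto_div_mul_eq_one {ι 𝕜 : Type*} [Field 𝕜] [TopologicalSpace 𝕜]
    [ContinuousMul 𝕜] {l : Filter ι} {f g : ι → 𝕜} {h : 𝕜} (hh : h ≠ 0)
    (hf : Tendsto (fun t => f t / (h * g t)) l (𝓝 1)) :
    Tendsto (fun t => f t / g t) l (𝓝 h) := by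
  have := hf.const_mul h
  rw [mul_one] at this
  refine this.congr fun t => ?_
  rw [← mul_div_assoc, mul_div_mul_left _ _ hh]

lemma setIntegral_pos_of_forall_mem_pos {X : Type*} [MeasurableSpace X] {μ : Measure X}
    {s : Set X} {f : X → ℝ} (hs : MeasurableSet s) (hμs : 0 < μ s) (hf : ∀ x ∈ s, 0 < f x)
    (hfi : IntegrableOn f s μ) : 0 < ∫ x in s, f x ∂μ := by
  rw [setIntegral_pos_iff_support_of_nonneg_ae
    (ae_restrict_of_forall_mem hs fun x hx => (hf x hx).le) hfi]
  exact hμs.trans_le (measure_mono fun x hx => ⟨(hf x hx).ne', hx⟩)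

lemma intervalIntegral_conv_eq_add_half {p m : ℝ → ℝ} (hp : Continuous p) (hm : Continuous m)
    (t : ℝ) :
    ∫ s in (0:ℝ)..t, p (t - s) * m s =
      (∫ s in (0:ℝ)..t / 2, p (t - s) * m s) + ∫ s in (0:ℝ)..t / 2, m (t - s) * p s := by
  have hcont : Continuous fun s => p (t - s) * m s := by fun_prop
  rw [← intervalIntegral.integral_add_adjacent_intervals (hcont.intervalIntegrable 0 (t / 2))
    (hcont.intervalIntegrable (t / 2) t)]
  congr 1
  have := intervalIntegral.integral_comp_sub_left (fun u => p u * m (t - u))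
    (a := t / 2) (b := t) t
  simp only [sub_sub_cancel, sub_self, sub_half] at this
  rw [this]
  simp only [mul_comm]

lemma comp_sub_div_rpow_eq (p : ℝ → ℝ) {q s t : ℝ} (hts : s < t) (ht : 0 < t) :
    p (t - s) / t ^ (-q) = p (t - s) / (t - s) ^ (-q) * ((t - s) / t) ^ (-q) := by
  rw [Real.div_rpow (sub_pos.2 hts).le ht.le, div_mul_div_comm, mul_comm (p _),
    mul_div_mul_left _ _ (Real.rpow_pos_of_pos (sub_pos.2 hts) _).ne']

lemma tendsto_setIntegral_Ioc_mul_of_dominated {k : ℝ → ℝ → ℝ} {m a : ℝ → ℝ}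
    {L C : ℝ} (ha : Tendsto a atTop atTop)
    (hk_meas : ∀ t, AEStronglyMeasurable (k t) (volume.restrict (Ioi 0)))
    (hk_bound : ∀ᶠ t in atTop, ∀ s ∈ Ioc 0 (a t), |k t s| ≤ C)
    (hk_lim : ∀ s, 0 < s → Tendsto (fun t => k t s) atTop (𝓝 L))
    (hm : IntegrableOn m (Ioi 0)) :
    Tendsto (fun t => ∫ s in Ioc 0 (a t), k t s * m s) atTop
      (𝓝 (L * ∫ s in Ioi 0, m s)) := by
  have hF : ∀ t, ∫ s in Ioc 0 (a t), k t s * m s =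
      ∫ s in Ioi 0, (Ioc 0 (a t)).indicator (fun s => k t s * m s) s := fun t => by
    rw [setIntegral_indicator measurableSet_Ioc, inter_eq_right.2 Ioc_subset_Ioi_self]
  simp only [hF, ← integral_const_mul]
  refine tendsto_integral_filter_of_dominated_convergence (fun s => |C| * ‖m s‖)
    (Eventually.of_forall fun t => ((hk_meas t).mul hm.aestronglyMeasurable).indicator
      measurableSet_Ioc) ?_ (hm.norm.const_mul |C|) ?_
  · filter_upwards [hk_bound] with t ht
    refine ae_restrict_of_forall_mem measurableSet_Ioi fun s _ => ?_
    by_cases hs : s ∈ Ioc 0 (a t)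
    · rw [indicator_of_mem hs, norm_mul]
      exact mul_le_mul_of_nonneg_right ((ht s hs).trans (le_abs_self C)) (norm_nonneg _)
    · rw [indicator_of_notMem hs, norm_zero]
      positivity
  · refine ae_restrict_of_forall_mem measurableSet_Ioi fun s hs => ?_
    refine ((hk_lim s hs).mul_const (m s)).congr' ?_
    filter_upwards [ha.eventually_ge_atTop s] with t hst
    rw [indicator_of_mem (show s ∈ Ioc 0 (a t) from ⟨hs, hst⟩)]

variable {p : ℝ → ℝ} {q h : ℝ}

lemma tendsto_comp_sub_div_rpow (hp : Tendsto (fun t => p t / t ^ (-q)) atTop (𝓝 h)) (s : ℝ) :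
    Tendsto (fun t => p (t - s) / t ^ (-q)) atTop (𝓝 h) := by
  have hshift : Tendsto (fun t => p (t - s) / (t - s) ^ (-q)) atTop (𝓝 h) :=
    hp.comp (tendsto_atTop_add_const_right atTop (-s) tendsto_id)
  have hratio : Tendsto (fun t => (t - s) / t) atTop (𝓝 1) := by
    have : Tendsto (fun t => 1 - s / t) atTop (𝓝 (1 - 0)) :=
      tendsto_const_nhds.sub (tendsto_const_nhds.div_atTop tendsto_id)
    rw [sub_zero] at this
    refine this.congr' ?_
    filter_upwards [eventually_ne_atTop 0] with t ht
    rw [sub_div, div_self ht]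
  have hpow : Tendsto (fun t => ((t - s) / t) ^ (-q)) atTop (𝓝 1) := by
    simpa only [Real.one_rpow] using hratio.rpow_const (Or.inl one_ne_zero)
  have := hshift.mul hpow
  rw [mul_one] at this
  refine this.congr' ?_
  filter_upwards [eventually_gt_atTop s, eventually_gt_atTop 0] with t hts ht
  rw [comp_sub_div_rpow_eq p hts ht]

lemma eventually_abs_comp_sub_div_rpow_le (hq : 0 ≤ q)
    (hp : Tendsto (fun t => p t / t ^ (-q)) atTop (𝓝 h)) :
    ∀ᶠ t in atTop, ∀ s ∈ Icc 0 (t / 2), |p (t - s) / t ^ (-q)| ≤ (|h| + 1) * 2 ^ q := by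
  obtain ⟨T, hT⟩ := eventually_atTop.1 <|
    (hp.abs.eventually (eventually_le_nhds (lt_add_one |h|)))
  filter_upwards [eventually_ge_atTop (2 * T), eventually_gt_atTop 0] with t htT ht s ⟨hs0, hst⟩
  have hts : s < t := by linarith
  have hratio : (1 / 2 : ℝ) ≤ (t - s) / t := by
    rw [le_div_iff₀ ht]; linarith
  have hpow : ((t - s) / t) ^ (-q) ≤ 2 ^ q := by
    calc ((t - s) / t) ^ (-q) ≤ (1 / 2 : ℝ) ^ (-q) :=
          Real.rpow_le_rpow_of_nonpos (by norm_num) hratio (neg_nonpos.2 hq)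
      _ = 2 ^ q := by
            rw [Real.rpow_neg (by norm_num), Real.div_rpow (by norm_num) (by norm_num),
              Real.one_rpow, one_div, inv_inv]
  rw [comp_sub_div_rpow_eq p hts ht, abs_mul,
    abs_of_pos (Real.rpow_pos_of_pos (div_pos (sub_pos.2 hts) ht) _)]
  exact mul_le_mul (hT _ (by linarith)) hpow (by positivity) (by positivity)

lemma tendsto_integral_half_conv_div_rpow {m : ℝ → ℝ} (hq : 0 ≤ q) (hp_meas : Measurable p)
    (hp : Tendsto (fun t => p t / t ^ (-q)) atTop (𝓝 h)) (hm : IntegrableOn m (Ioi 0)) :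
    Tendsto (fun t => (∫ s in (0:ℝ)..t / 2, p (t - s) * m s) / t ^ (-q)) atTop
      (𝓝 (h * ∫ s in Ioi 0, m s)) := by
  have key := tendsto_setIntegral_Ioc_mul_of_dominated (k := fun t s => p (t - s) / t ^ (-q))
    (tendsto_id.atTop_div_const two_pos)
    (fun _ => ((hp_meas.comp (measurable_const.sub measurable_id)).div_const _
      |>.aestronglyMeasurable))
    ((eventually_abs_comp_sub_div_rpow_le hq hp).mono fun _ ht s hs =>
      ht s (Ioc_subset_Icc_self hs))
    (fun s _ => tendsto_comp_sub_div_rpow hp s) hm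
  refine key.congr' ?_
  filter_upwards [eventually_ge_atTop 0] with t ht
  rw [intervalIntegral.integral_of_le (by linarith), ← integral_div]
  simp only [id, div_mul_eq_mul_div]

theorem stmt14_general (d : ℕ) (α : ℝ) (hq : 1 < (d : ℝ) / α)
    (p m : ℝ → ℝ) (hp_cont : Continuous p) (hm_cont : Continuous m)
    (hp_pos : ∀ t : ℝ, 0 ≤ t → 0 < p t) (hm_pos : ∀ t : ℝ, 0 ≤ t → 0 < m t)
    (h c : ℝ) (hh : 0 < h) (hc : 0 < c)
    (hp : Tendsto (fun t : ℝ => p t / (h * t ^ (-((d : ℝ) / α)))) atTop (nhds 1))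
    (hm : Tendsto (fun t : ℝ => m t / (c * t ^ (-((d : ℝ) / α)))) atTop (nhds 1))
    (hp_int : IntegrableOn p (Set.Ioi 0) volume)
    (hm_int : IntegrableOn m (Set.Ioi 0) volume)
    (P M : ℝ) (hP : P = ∫ t in Set.Ioi (0:ℝ), p t)
    (hM : M = ∫ t in Set.Ioi (0:ℝ), m t) :
    Tendsto
      (fun t : ℝ =>
        (∫ s in (0:ℝ)..t, p (t - s) * m s) /
          ((M * h + P * c) * t ^ (-((d : ℝ) / α))))
      atTop (nhds 1) := by
  set q := (d : ℝ) / α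
  have hq0 : 0 ≤ q := by linarith
  have hPpos : 0 < P := hP ▸ setIntegral_pos_of_forall_mem_pos measurableSet_Ioi
    (by simp) (fun t ht => hp_pos t ht.le) hp_int
  have hMpos : 0 < M := hM ▸ setIntegral_pos_of_forall_mem_pos measurableSet_Ioi
    (by simp) (fun t ht => hm_pos t ht.le) hm_int
  have hsum : Tendsto (fun t => (∫ s in (0:ℝ)..t, p (t - s) * m s) / t ^ (-q)) atTop
      (𝓝 (M * h + P * c)) := by
    have := (tendsto_integral_half_conv_div_rpow hq0 hp_cont.measurable
      (tendsto_div_of_tendsto_div_mul_eq_one hh.ne' hp) hm_int).add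
      (tendsto_integral_half_conv_div_rpow hq0 hm_cont.measurable
      (tendsto_div_of_tendsto_div_mul_eq_one hc.ne' hm) hp_int)
    rw [← hP, ← hM, mul_comm h, mul_comm c] at this
    simpa only [intervalIntegral_conv_eq_add_half hp_cont hm_cont, add_div] using this
  have := hsum.div_const (M * h + P * c)
  rw [div_self (by positivity)] at this
  simpa only [div_div, mul_comm] using this

/-- two-sided convolution asymptotics for two integrable functions
with the same power decay `t^{-d/α}`, `d/α > 1`. -/
theorem stmt14 (d : ℕ) (hd : 0 < d) (α : ℝ) (hα : 0 < α) (hq : 1 < (d : ℝ) / α)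
    (p m : ℝ → ℝ) (hp_cont : Continuous p) (hm_cont : Continuous m)
    (hp_pos : ∀ t : ℝ, 0 ≤ t → 0 < p t) (hm_pos : ∀ t : ℝ, 0 ≤ t → 0 < m t)
    (h c : ℝ) (hh : 0 < h) (hc : 0 < c)
    (hp : Tendsto (fun t : ℝ => p t / (h * t ^ (-((d : ℝ) / α)))) atTop (nhds 1))
    (hm : Tendsto (fun t : ℝ => m t / (c * t ^ (-((d : ℝ) / α)))) atTop (nhds 1))
    (hp_int : IntegrableOn p (Set.Ioi 0) volume)
    (hm_int : IntegrableOn m (Set.Ioi 0) volume)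
    (P M : ℝ) (hP : P = ∫ t in Set.Ioi (0:ℝ), p t)
    (hM : M = ∫ t in Set.Ioi (0:ℝ), m t) :
    Tendsto
      (fun t : ℝ =>
        (∫ s in (0:ℝ)..t, p (t - s) * m s) /
          ((M * h + P * c) * t ^ (-((d : ℝ) / α))))
      atTop (nhds 1) :=
  stmt14_general d α hq p m hp_cont hm_cont hp_pos hm_pos h c hh hc hp hm hp_int hm_int P M hP hM
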